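/- Let m ≥ 1, g ≥ 2 and V = Fin g → ZMod m × ZMod m. For any two distinct indices i ≠ j in Fin g, the composition T5a(j) ∘ T2(i,j) ∘ T5a(j) ∘ T2(i,j) (applying T2(i,j) first) equals the bijection of V sending x to Function.update x i ((x i).1, (x i).2 − 2), i.e. it subtracts 2 from βᵢ and leaves all other coordinates unchanged. (This is the key computation in part (b) of the proof of Lemma 5.4: the transformation (…, αᵢ, βᵢ, …) ↦ (…, αᵢ, βᵢ − 2, …) lies in the group generated by the Dehn twist transformations.) -/

import Mathlib

/-- Shear of the `β`-components of `x : Fin g → ZMod m × ZMod m` by an amount depending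
only on the `α`-components. -/
def shearB (m g : ℕ) (h : (Fin g → ZMod m) → Fin g → ZMod m) :
    Equiv.Perm (Fin g → ZMod m × ZMod m) where
  toFun x k := ((x k).1, (x k).2 + h (fun l => (x l).1) k)
  invFun x k := ((x k).1, (x k).2 - h (fun l => (x l).1) k)
  left_inv x := by funext k; simp
  right_inv x := by funext k; simp

/-- Shear of the `α`-components of `x : Fin g → ZMod m × ZMod m` by an amount depending
only on the `β`-components. -/
def shearA (m g : ℕ) (h : (Fin g → ZMod m) → Fin g → ZMod m) :
    Equiv.Perm (Fin g → ZMod m × ZMod m) where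
  toFun x k := ((x k).1 + h (fun l => (x l).2) k, (x k).2)
  invFun x k := ((x k).1 - h (fun l => (x l).2) k, (x k).2)
  left_inv x := by funext k; simp
  right_inv x := by funext k; simp

/-- Apply the permutation `e` of `ZMod m × ZMod m` at the single coordinate `i`. -/
def atC (m g : ℕ) (i : Fin g) (e : Equiv.Perm (ZMod m × ZMod m)) :
    Equiv.Perm (Fin g → ZMod m × ZMod m) :=
  Equiv.piCongrRight fun k => if k = i then e else Equiv.refl _

/-- `(α, β) ↦ (−α, −β)`. -/
def negPair (m : ℕ) : Equiv.Perm (ZMod m × ZMod m) where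
  toFun p := (-p.1, -p.2)
  invFun p := (-p.1, -p.2)
  left_inv := by rintro ⟨a, b⟩; simp
  right_inv := by rintro ⟨a, b⟩; simp

/-- `(α, β) ↦ (−β, α)`. -/
def rotPair (m : ℕ) : Equiv.Perm (ZMod m × ZMod m) where
  toFun p := (-p.2, p.1)
  invFun p := (p.2, -p.1)
  left_inv := by rintro ⟨a, b⟩; simp
  right_inv := by rintro ⟨a, b⟩; simp

/-- `(α, β) ↦ (−β, α − γ − 1)`. -/
def t3Pair (m : ℕ) (γ : ZMod m) : Equiv.Perm (ZMod m × ZMod m) where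
  toFun p := (-p.2, p.1 - γ - 1)
  invFun p := (p.2 + γ + 1, -p.1)
  left_inv := by rintro ⟨a, b⟩; simp [Prod.ext_iff]; ring
  right_inv := by rintro ⟨a, b⟩; simp [Prod.ext_iff]; ring

/-- Dehn twist action `T1a(i) : (αᵢ, βᵢ) ↦ (αᵢ+βᵢ, βᵢ)`. -/
def T1a (m g : ℕ) (i : Fin g) : Equiv.Perm (Fin g → ZMod m × ZMod m) :=
  shearA m g fun b k => if k = i then b i else 0

/-- Dehn twist action `T1b(i) : (αᵢ, βᵢ) ↦ (αᵢ, βᵢ+αᵢ)`. -/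
def T1b (m g : ℕ) (i : Fin g) : Equiv.Perm (Fin g → ZMod m × ZMod m) :=
  shearB m g fun a k => if k = i then a i else 0

/-- Dehn twist action `T2(i,j) : βᵢ ↦ βᵢ − αⱼ − 1, βⱼ ↦ βⱼ − αᵢ − 1`. -/
def T2 (m g : ℕ) (i j : Fin g) : Equiv.Perm (Fin g → ZMod m × ZMod m) :=
  shearB m g fun a k => if k = i then -a j - 1 else if k = j then -a i - 1 else 0

/-- Dehn twist action `T3` at the index `i`: `(αᵢ, βᵢ) ↦ (−βᵢ, αᵢ − γ − 1)`. -/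
def T3 (m g : ℕ) (i : Fin g) (γ : ZMod m) : Equiv.Perm (Fin g → ZMod m × ZMod m) :=
  atC m g i (t3Pair m γ)

/-- Dehn twist action `T4(i,j)`: interchange the pairs at positions `i` and `j`. -/
def T4 (m g : ℕ) (i j : Fin g) : Equiv.Perm (Fin g → ZMod m × ZMod m) :=
  Equiv.arrowCongr (Equiv.swap i j) (Equiv.refl _)

/-- Dehn twist action `T5a(i) : (αᵢ, βᵢ) ↦ (−αᵢ, −βᵢ)`. -/
def T5a (m g : ℕ) (i : Fin g) : Equiv.Perm (Fin g → ZMod m × ZMod m) :=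
  atC m g i (negPair m)

/-- Dehn twist action `T5b(i) : (αᵢ, βᵢ) ↦ (−βᵢ, αᵢ)`. -/
def T5b (m g : ℕ) (i : Fin g) : Equiv.Perm (Fin g → ZMod m × ZMod m) :=
  atC m g i (rotPair m)

/-- The generators of the twist group: `T1a(i)`, `T1b(i)`, `T2(i,j)` for `i ≠ j`, `T3` at
the last index, `T4(i,j)` for `i ≠ j`, `T5a(i)`, `T5b(i)`. -/
def twistGens (m g : ℕ) (hg : 0 < g) (γ : ZMod m) :
    Set (Equiv.Perm (Fin g → ZMod m × ZMod m)) :=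
  (Set.range fun i => T1a m g i) ∪ (Set.range fun i => T1b m g i) ∪
    {σ | ∃ i j : Fin g, i ≠ j ∧ σ = T2 m g i j} ∪
    {T3 m g ⟨g - 1, Nat.sub_lt hg Nat.one_pos⟩ γ} ∪
    {σ | ∃ i j : Fin g, i ≠ j ∧ σ = T4 m g i j} ∪
    (Set.range fun i => T5a m g i) ∪ (Set.range fun i => T5b m g i)

/-- The twist group `W(m, g, γ)`: the subgroup of `Equiv.Perm (Fin g → ZMod m × ZMod m)`
generated by the Dehn twist actions. -/
def twistGroup (m g : ℕ) (hg : 0 < g) (γ : ZMod m) :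
    Subgroup (Equiv.Perm (Fin g → ZMod m × ZMod m)) :=
  Subgroup.closure (twistGens m g hg γ)

/-! The maps `T2(i,j)` and `T5a(j) T2(i,j) T5a(j)` are both shears of the `β`-components by
functions of the `α`-components, and conjugating by `T5a(j)` flips the sign of `αⱼ` in the
shear. Shears compose additively, so the `αⱼ` and `αᵢ` terms cancel and only the two
constants `-1` on `βᵢ` survive. -/

section Shears

variable {m g : ℕ}

@[simp]
theorem shearB_apply (h : (Fin g → ZMod m) → Fin g → ZMod m) (x : Fin g → ZMod m × ZMod m)
    (k : Fin g) : shearB m g h x k = ((x k).1, (x k).2 + h (fun l => (x l).1) k) :=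
  rfl

theorem shearB_mul_shearB (h₁ h₂ : (Fin g → ZMod m) → Fin g → ZMod m) :
    shearB m g h₁ * shearB m g h₂ = shearB m g (h₁ + h₂) := by
  ext x k
  · simp
  · simp only [shearB_apply, Equiv.Perm.mul_apply, Pi.add_apply]
    abel

theorem atC_apply (i : Fin g) (e : Equiv.Perm (ZMod m × ZMod m))
    (x : Fin g → ZMod m × ZMod m) : atC m g i e x = Function.update x i (e (x i)) := by
  funext k
  rcases eq_or_ne k i with rfl | hk
  · simp [atC]
  · simp [atC, hk]

theorem T5a_mul_T2_mul_T5a {i j : Fin g} (hij : i ≠ j) :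
    T5a m g j * T2 m g i j * T5a m g j =
      shearB m g fun a k => if k = i then a j - 1 else if k = j then a i + 1 else 0 := by
  ext x k
  · rcases eq_or_ne k j with rfl | hkj
    · simp [T5a, T2, atC_apply, negPair]
    · simp [T5a, T2, atC_apply, negPair, hkj]
  · rcases eq_or_ne k j with rfl | hkj
    · simp only [T5a, T2, negPair, Equiv.Perm.mul_apply, atC_apply, Equiv.coe_fn_mk,
        shearB_apply, Function.update_self, Function.update_of_ne hij, if_neg hij.symm,
        ↓reduceIte]
      ring
    · rcases eq_or_ne k i with rfl | hki
      · simp [T5a, T2, atC_apply, negPair, hkj]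
      · simp [T5a, T2, atC_apply, negPair, hkj, hki]

end Shears

theorem twist_composition_subtracts_two_general (m g : ℕ)
    (i j : Fin g) (hij : i ≠ j) (x : Fin g → ZMod m × ZMod m) :
    (T5a m g j * T2 m g i j * T5a m g j * T2 m g i j) x
      = Function.update x i ((x i).1, (x i).2 - 2) := by
  rw [T5a_mul_T2_mul_T5a hij, T2, shearB_mul_shearB]
  funext k
  rcases eq_or_ne k i with rfl | hki
  · simp only [shearB_apply, Pi.add_apply, ↓reduceIte, Function.update_self, Prod.mk.injEq,
      true_and]
    ring
  · rcases eq_or_ne k j with rfl | hkj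
    · simp [hki]
    · simp [hki, hkj]

/-- The key computation in the proof of Lemma 5.4: the composition
`T5a(j) ∘ T2(i,j) ∘ T5a(j) ∘ T2(i,j)` (applying `T2(i,j)` first) subtracts `2` from `βᵢ`
and leaves all other coordinates unchanged. -/
theorem twist_composition_subtracts_two (m g : ℕ) (hm : 1 ≤ m) (hg : 2 ≤ g)
    (i j : Fin g) (hij : i ≠ j) (x : Fin g → ZMod m × ZMod m) :
    (T5a m g j * T2 m g i j * T5a m g j * T2 m g i j) x
      = Function.update x i ((x i).1, (x i).2 - 2) :=
  twist_composition_subtracts_two_general m g i j hij x
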